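/- Let T > 0, r ≥ 1 and β ∈ (0,1/2). Then there exists a constant C > 0, depending only on β, r and T, such that for every integer N ≥ 2 and every n ∈ {2,…,N}, ∫_{t₁}^{t_n} (t_n − s)^{−2β} · ( ∫_0^{t₁} |(s − u)^{−β} − (ŝ − u)^{−β}|² du ) ds ≤ C·N^{−2(1−2β)}, where ŝ is the left graded-mesh point of s. -/

import Mathlib

/-!
With `ε = r T / N`, the mean value theorem bounds every mesh step, and in particular `t₁`, by `ε`.
The inner integral `J(s) = ∫₀^{t₁} |(s - u)^{-β} - (ŝ - u)^{-β}|² du` is at most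
`t₁^{1-2β} / (1 - 2β)`; since `(x^{-β} - y^{-β})² ≤ x^{-2β} - y^{-2β} ≤ 2β (y - x) x^{-2β-1}`,
it is also at most `2β t₁ (s - ŝ) (ŝ - t₁)^{-2β-1}`. Using the first bound when `s - t₁ ≤ 2ε` and
the second otherwise (then `ŝ - t₁ ≥ max(ε, (s - t₁)/2)`) gives
`J(s) ≤ 2/(1-2β) · ε^{2(1-2β)} (s - t₁)^{2β-1}` in both cases. What remains of the outer integral,
`∫_{t₁}^{t_n} (t_n - s)^{-2β} (s - t₁)^{2β-1} ds`, is a Beta integral `B(2β, 1 - 2β)`, bounded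
independently of the mesh by splitting at the midpoint.
-/

/-- The graded mesh point `t_n = T * (n/N)^r`. -/
noncomputable def gmesh (T r : ℝ) (N n : ℕ) : ℝ := T * ((n : ℝ) / (N : ℝ)) ^ r

open MeasureTheory Set

lemma rpow_sub_rpow_le_mul_sub {r x y : ℝ} (hr : 1 ≤ r) (hy : 0 ≤ y) (hyx : y ≤ x)
    (hx : x ≤ 1) : x ^ r - y ^ r ≤ r * (x - y) := by
  refine (convex_Icc (0 : ℝ) 1).image_sub_le_mul_sub_of_deriv_le (f := fun z => z ^ r)
    (continuousOn_id.rpow_const fun _ _ => Or.inr (by linarith)) ?_ (fun z hz => ?_) y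
    ⟨hy, hyx.trans hx⟩ x ⟨hy.trans hyx, hx⟩ hyx
  · exact (Real.differentiable_rpow_const hr).differentiableOn
  · rw [interior_Icc] at hz
    rw [Real.deriv_rpow_const]
    have : z ^ (r - 1) ≤ 1 := Real.rpow_le_one hz.1.le hz.2.le (by linarith)
    nlinarith

lemma rpow_neg_sub_rpow_neg_le {d x y : ℝ} (hd : 0 ≤ d) (hx : 0 < x) (hxy : x ≤ y) :
    x ^ (-d) - y ^ (-d) ≤ d * (y - x) * x ^ (-d - 1) := by
  have hpos : ∀ z ∈ interior (Ici x), 0 < z := fun z hz => by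
    rw [interior_Ici] at hz; exact hx.trans hz
  have key := (convex_Ici x).mul_sub_le_image_sub_of_le_deriv (f := fun z => z ^ (-d))
    (C := -d * x ^ (-d - 1))
    (continuousOn_id.rpow_const fun z hz => Or.inl (hx.trans_le hz).ne')
    (fun z hz => (Real.differentiableAt_rpow_const_of_ne _ (hpos z hz).ne').differentiableWithinAt)
    (fun z hz => ?_) x self_mem_Ici y hxy hxy
  · linarith
  · rw [Real.deriv_rpow_const]
    have : z ^ (-d - 1) ≤ x ^ (-d - 1) := by
      rw [interior_Ici] at hz
      exact Real.rpow_le_rpow_of_nonpos hx hz.le (by linarith)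
    nlinarith

lemma sq_abs_rpow_neg_sub_le {β x y : ℝ} (hβ : 0 ≤ β) (hx : 0 < x) (hxy : x ≤ y) :
    |y ^ (-β) - x ^ (-β)| ^ 2 ≤ x ^ (-(2 * β)) - y ^ (-(2 * β)) := by
  have hy : 0 < y := hx.trans_le hxy
  have hyx : y ^ (-β) ≤ x ^ (-β) := Real.rpow_le_rpow_of_nonpos hx hxy (neg_nonpos.mpr hβ)
  have hy0 : 0 ≤ y ^ (-β) := Real.rpow_nonneg hy.le _
  rw [sq_abs, show -(2 * β) = -β * 2 by ring, Real.rpow_mul hx.le, Real.rpow_mul hy.le]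
  norm_num
  nlinarith

lemma div_two_rpow_le {x q : ℝ} (hx : 0 ≤ x) (hq : -1 ≤ q) : (x / 2) ^ q ≤ 2 * x ^ q := by
  have h2 : (2 : ℝ) ^ (-1 : ℝ) ≤ 2 ^ q := Real.rpow_le_rpow_of_exponent_le one_le_two hq
  rw [Real.rpow_neg_one] at h2
  rw [Real.div_rpow hx zero_le_two, div_le_iff₀ (by positivity)]
  nlinarith [Real.rpow_nonneg hx q]

lemma intervalIntegrable_sub_rpow {a b e : ℝ} (he : -1 < e) :
    IntervalIntegrable (fun s => (b - s) ^ e) volume a b := by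
  simpa using (intervalIntegral.intervalIntegrable_rpow' (a := b - a) (b := 0) he).comp_sub_left b

lemma intervalIntegrable_rpow_sub {a b e : ℝ} (he : -1 < e) :
    IntervalIntegrable (fun s => (s - a) ^ e) volume a b := by
  simpa using (intervalIntegral.intervalIntegrable_rpow' (a := 0) (b := b - a) he).comp_sub_right a

lemma integral_sub_rpow {a b e : ℝ} (he : -1 < e) :
    ∫ s in a..b, (b - s) ^ e = (b - a) ^ (e + 1) / (e + 1) := by
  rw [intervalIntegral.integral_comp_sub_left (fun x : ℝ => x ^ e) b, sub_self,
    integral_rpow (Or.inl he), Real.zero_rpow (by linarith), sub_zero]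

lemma integral_rpow_sub {a b e : ℝ} (he : -1 < e) :
    ∫ s in a..b, (s - a) ^ e = (b - a) ^ (e + 1) / (e + 1) := by
  rw [intervalIntegral.integral_comp_sub_right (fun x : ℝ => x ^ e) a, sub_self,
    integral_rpow (Or.inl he), Real.zero_rpow (by linarith), sub_zero]

lemma integral_mono_on_Ioo_of_nonneg {f g : ℝ → ℝ} {a b : ℝ} (hab : a ≤ b)
    (hg : IntervalIntegrable g volume a b) (hf : ∀ x ∈ Ioo a b, 0 ≤ f x)
    (hfg : ∀ x ∈ Ioo a b, f x ≤ g x) :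
    ∫ x in a..b, f x ≤ ∫ x in a..b, g x := by
  rw [intervalIntegral.integral_of_le hab, intervalIntegral.integral_of_le hab,
    integral_Ioc_eq_integral_Ioo, integral_Ioc_eq_integral_Ioo]
  exact integral_mono_of_nonneg (ae_restrict_of_forall_mem measurableSet_Ioo hf)
    (hg.1.mono_set Ioo_subset_Ioc_self) (ae_restrict_of_forall_mem measurableSet_Ioo hfg)

lemma sub_rpow_mul_rpow_sub_le {a b s p : ℝ} (hp0 : 0 ≤ p) (hp1 : p ≤ 1) (hs : s ∈ Ioo a b) :
    (b - s) ^ (-p) * (s - a) ^ (p - 1)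
      ≤ ((b - a) / 2) ^ (-p) * (s - a) ^ (p - 1) + ((b - a) / 2) ^ (p - 1) * (b - s) ^ (-p) := by
  obtain ⟨has, hsb⟩ := hs
  have h₁ : 0 ≤ (b - s) ^ (-p) := Real.rpow_nonneg (by linarith) _
  have h₂ : 0 ≤ (s - a) ^ (p - 1) := Real.rpow_nonneg (by linarith) _
  rcases le_total (s - a) (b - s) with h | h
  · have : (b - s) ^ (-p) ≤ ((b - a) / 2) ^ (-p) :=
      Real.rpow_le_rpow_of_nonpos (by linarith) (by linarith) (by linarith)
    nlinarith [mul_nonneg (Real.rpow_nonneg (by linarith : 0 ≤ (b - a) / 2) (p - 1)) h₁]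
  · have : (s - a) ^ (p - 1) ≤ ((b - a) / 2) ^ (p - 1) :=
      Real.rpow_le_rpow_of_nonpos (by linarith) (by linarith) (by linarith)
    nlinarith [mul_nonneg (Real.rpow_nonneg (by linarith : 0 ≤ (b - a) / 2) (-p)) h₂]

lemma integral_le_of_le_beta_kernel {f : ℝ → ℝ} {a b p M : ℝ} (hab : a < b) (hp0 : 0 < p)
    (hp1 : p < 1) (hM : 0 ≤ M) (hf : ∀ s ∈ Ioo a b, 0 ≤ f s)
    (hfM : ∀ s ∈ Ioo a b, f s ≤ M * ((b - s) ^ (-p) * (s - a) ^ (p - 1))) :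
    ∫ s in a..b, f s ≤ M * (2 ^ p / p + 2 ^ (1 - p) / (1 - p)) := by
  set m := (b - a) / 2
  have hm : 0 < m := by positivity
  have h₁ := (intervalIntegrable_rpow_sub (a := a) (b := b) (e := p - 1) (by linarith)).const_mul
    (m ^ (-p))
  have h₂ := (intervalIntegrable_sub_rpow (a := a) (b := b) (e := -p) (by linarith)).const_mul
    (m ^ (p - 1))
  calc ∫ s in a..b, f s
      ≤ ∫ s in a..b, M * (m ^ (-p) * (s - a) ^ (p - 1) + m ^ (p - 1) * (b - s) ^ (-p)) :=
        integral_mono_on_Ioo_of_nonneg hab.le ((h₁.add h₂).const_mul M) hf fun s hs =>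
          (hfM s hs).trans (mul_le_mul_of_nonneg_left
            (sub_rpow_mul_rpow_sub_le hp0.le hp1.le hs) hM)
    _ = M * (2 ^ p / p + 2 ^ (1 - p) / (1 - p)) := by
        have hba : b - a = 2 * m := by ring
        have hscale : ∀ q : ℝ, m ^ (-q) * (b - a) ^ q = 2 ^ q := fun q => by
          rw [hba, Real.mul_rpow zero_le_two hm.le, Real.rpow_neg hm.le]
          field_simp [(Real.rpow_pos_of_pos hm q).ne']
        rw [intervalIntegral.integral_const_mul, intervalIntegral.integral_add h₁ h₂,
          intervalIntegral.integral_const_mul, intervalIntegral.integral_const_mul,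
          integral_rpow_sub (by linarith), integral_sub_rpow (by linarith), sub_add_cancel,
          neg_add_eq_sub, mul_div_assoc', mul_div_assoc', hscale,
          show p - 1 = -(1 - p) by ring, hscale]

noncomputable def kernelDistSq (β c a s : ℝ) : ℝ :=
  ∫ u in (0 : ℝ)..c, |(s - u) ^ (-β) - (a - u) ^ (-β)| ^ 2

section kernelDistSq

variable {β c a s : ℝ}

lemma kernelDistSq_nonneg (hc : 0 ≤ c) : 0 ≤ kernelDistSq β c a s :=
  intervalIntegral.integral_nonneg hc fun _ _ => by positivity

lemma kernelDistSq_le_rpow (hβ0 : 0 ≤ β) (hβ1 : β < 1 / 2) (hc : 0 < c) (hca : c ≤ a)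
    (has : a ≤ s) : kernelDistSq β c a s ≤ c ^ (1 - 2 * β) / (1 - 2 * β) := by
  have hint := integral_sub_rpow (a := 0) (b := c) (e := -(2 * β)) (by linarith)
  rw [sub_zero, show -(2 * β) + 1 = 1 - 2 * β by ring] at hint
  rw [← hint]
  refine integral_mono_on_Ioo_of_nonneg hc.le (intervalIntegrable_sub_rpow (by linarith))
    (fun _ _ => by positivity) fun u hu => ?_
  have hsu : 0 ≤ (s - u) ^ (-(2 * β)) := Real.rpow_nonneg (by linarith [hu.2]) _
  calc |(s - u) ^ (-β) - (a - u) ^ (-β)| ^ 2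
      ≤ (a - u) ^ (-(2 * β)) - (s - u) ^ (-(2 * β)) :=
        sq_abs_rpow_neg_sub_le hβ0 (by linarith [hu.2]) (by linarith)
    _ ≤ (c - u) ^ (-(2 * β)) := by
        linarith [Real.rpow_le_rpow_of_nonpos (by linarith [hu.2] : 0 < c - u)
          (by linarith : c - u ≤ a - u) (by linarith : -(2 * β) ≤ 0)]

lemma kernelDistSq_le_mul (hβ0 : 0 ≤ β) (hc : 0 ≤ c) (hca : c < a) (has : a ≤ s) :
    kernelDistSq β c a s ≤ c * (2 * β * (s - a) * (a - c) ^ (-(2 * β) - 1)) := by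
  set K := 2 * β * (s - a) * (a - c) ^ (-(2 * β) - 1)
  calc kernelDistSq β c a s ≤ ∫ _ in (0 : ℝ)..c, K :=
        integral_mono_on_Ioo_of_nonneg hc intervalIntegrable_const (fun _ _ => by positivity)
          fun u hu => ?_
    _ = c * K := by simp
  have hau : 0 < a - u := by linarith [hu.2]
  calc |(s - u) ^ (-β) - (a - u) ^ (-β)| ^ 2
      ≤ (a - u) ^ (-(2 * β)) - (s - u) ^ (-(2 * β)) :=
        sq_abs_rpow_neg_sub_le hβ0 hau (by linarith)
    _ ≤ 2 * β * ((s - u) - (a - u)) * (a - u) ^ (-(2 * β) - 1) :=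
        rpow_neg_sub_rpow_neg_le (by linarith) hau (by linarith)
    _ ≤ K := by
        rw [sub_sub_sub_cancel_right]
        exact mul_le_mul_of_nonneg_left
          (Real.rpow_le_rpow_of_nonpos (by linarith) (by linarith [hu.2]) (by linarith))
          (by nlinarith)

lemma kernelDistSq_le {ε : ℝ} (hβ0 : 0 ≤ β) (hβ1 : β < 1 / 2) (hc : 0 < c) (hcε : c ≤ ε)
    (hca : c ≤ a) (has : a ≤ s) (hsa : s - a ≤ ε) (hcs : c < s) :
    kernelDistSq β c a s ≤ 2 / (1 - 2 * β) * ε ^ (2 * (1 - 2 * β)) * (s - c) ^ (2 * β - 1) := by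
  have hε : 0 < ε := hc.trans_le hcε
  have hd : 0 < s - c := by linarith
  have hp : 0 < 1 - 2 * β := by linarith
  rcases le_or_gt (s - c) (2 * ε) with hsmall | hlarge
  · have hεd : ε ^ (2 * β - 1) ≤ 2 * (s - c) ^ (2 * β - 1) :=
      calc ε ^ (2 * β - 1) = (2 * ε / 2) ^ (2 * β - 1) := by
            rw [mul_div_cancel_left₀ _ two_ne_zero]
        _ ≤ 2 * (2 * ε) ^ (2 * β - 1) := div_two_rpow_le (by positivity) (by linarith)
        _ ≤ 2 * (s - c) ^ (2 * β - 1) := by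
            gcongr 2 * ?_
            exact Real.rpow_le_rpow_of_nonpos hd hsmall (by linarith)
    calc kernelDistSq β c a s ≤ c ^ (1 - 2 * β) / (1 - 2 * β) :=
          kernelDistSq_le_rpow hβ0 hβ1 hc hca has
      _ ≤ ε ^ (1 - 2 * β) / (1 - 2 * β) := by
          gcongr
      _ = ε ^ (2 * (1 - 2 * β)) * ε ^ (2 * β - 1) / (1 - 2 * β) := by
          rw [← Real.rpow_add hε]; ring_nf
      _ ≤ ε ^ (2 * (1 - 2 * β)) * (2 * (s - c) ^ (2 * β - 1)) / (1 - 2 * β) := by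
          gcongr
      _ = 2 / (1 - 2 * β) * ε ^ (2 * (1 - 2 * β)) * (s - c) ^ (2 * β - 1) := by ring
  · have hac : ε ≤ a - c := by linarith
    have hac' : s - c ≤ 2 * (a - c) := by linarith
    have hac0 : 0 < a - c := hε.trans_le hac
    have hsplit : (a - c) ^ (-(2 * β) - 1) = (a - c) ^ (-(4 * β)) * (a - c) ^ (2 * β - 1) := by
      rw [← Real.rpow_add hac0]; ring_nf
    have h₁ : (a - c) ^ (-(4 * β)) ≤ ε ^ (-(4 * β)) :=
      Real.rpow_le_rpow_of_nonpos hε hac (by linarith)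
    have h₂ : (a - c) ^ (2 * β - 1) ≤ 2 * (s - c) ^ (2 * β - 1) :=
      calc (a - c) ^ (2 * β - 1) ≤ ((s - c) / 2) ^ (2 * β - 1) :=
            Real.rpow_le_rpow_of_nonpos (by positivity) (by linarith) (by linarith)
        _ ≤ 2 * (s - c) ^ (2 * β - 1) := div_two_rpow_le hd.le (by linarith)
    have hεε : ε * ε * ε ^ (-(4 * β)) = ε ^ (2 * (1 - 2 * β)) := by
      rw [show 2 * (1 - 2 * β) = 2 + -(4 * β) by ring, Real.rpow_add hε, Real.rpow_two, sq]
    calc kernelDistSq β c a s ≤ c * (2 * β * (s - a) * (a - c) ^ (-(2 * β) - 1)) :=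
          kernelDistSq_le_mul hβ0 hc.le (by linarith) has
      _ ≤ ε * (2 * β * ε * (ε ^ (-(4 * β)) * (2 * (s - c) ^ (2 * β - 1)))) := by
          rw [hsplit]
          gcongr
      _ = 2 * (2 * β) * ε ^ (2 * (1 - 2 * β)) * (s - c) ^ (2 * β - 1) := by
          rw [← hεε]; ring
      _ ≤ 2 / (1 - 2 * β) * ε ^ (2 * (1 - 2 * β)) * (s - c) ^ (2 * β - 1) := by
          gcongr
          rw [le_div_iff₀ hp]
          nlinarith

end kernelDistSq

lemma StrictMono.exists_mem_Ico_of_mem_Ioo {α : Type*} [LinearOrder α] {f : ℕ → α}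
    (hf : StrictMono f) {n : ℕ} {s : α} (hs : s ∈ Ioo (f 1) (f n)) :
    ∃ i, 1 ≤ i ∧ i < n ∧ s ∈ Ico (f i) (f (i + 1)) := by
  have hs₀ : s ∈ Ico (f 0) (f n) := ⟨(hf zero_lt_one).le.trans hs.1.le, hs.2⟩
  obtain ⟨i, hi, hsi⟩ := mem_iUnion₂.mp (Ico_subset_biUnion_Ico n f hs₀)
  have : 1 < i + 1 := hf.lt_iff_lt.mp (hs.1.trans hsi.2)
  exact ⟨i, by omega, Finset.mem_range.mp hi, hsi⟩

section gmesh

variable {T r : ℝ} {N : ℕ}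

lemma gmesh_zero (hr : r ≠ 0) : gmesh T r N 0 = 0 := by
  simp [gmesh, Real.zero_rpow hr]

lemma gmesh_strictMono (hT : 0 < T) (hr : 0 < r) (hN : 0 < N) : StrictMono (gmesh T r N) :=
  fun i j hij => mul_lt_mul_of_pos_left (Real.rpow_lt_rpow (by positivity)
    (div_lt_div_of_pos_right (Nat.cast_lt.mpr hij) (Nat.cast_pos.mpr hN)) hr) hT

lemma gmesh_succ_sub_le (hT : 0 ≤ T) (hr : 1 ≤ r) {i : ℕ} (hi : i < N) :
    gmesh T r N (i + 1) - gmesh T r N i ≤ r * T / N := by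
  have hN : (0 : ℝ) < N := Nat.cast_pos.mpr (by omega)
  have hiN : ((i + 1 : ℕ) : ℝ) / N ≤ 1 := by
    rw [div_le_one hN]; exact_mod_cast hi
  have key := rpow_sub_rpow_le_mul_sub hr (by positivity)
    (div_le_div_of_nonneg_right (Nat.cast_le.mpr i.le_succ) hN.le) hiN
  calc gmesh T r N (i + 1) - gmesh T r N i
      = T * ((((i + 1 : ℕ) : ℝ) / N) ^ r - ((i : ℝ) / N) ^ r) := by unfold gmesh; ring
    _ ≤ T * (r * (((i + 1 : ℕ) : ℝ) / N - (i : ℝ) / N)) := mul_le_mul_of_nonneg_left key hT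
    _ = r * T / N := by push_cast; field_simp; ring

end gmesh

/-- Double-integral kernel bound (equation `eq.diffSqureDoub1`). -/
theorem stmt15 (T r β : ℝ) (hT : 0 < T) (hr : 1 ≤ r)
    (hβ : β ∈ Set.Ioo (0:ℝ) (1/2)) :
    ∃ C > (0:ℝ), ∀ N : ℕ, 2 ≤ N → ∀ hat : ℝ → ℝ,
      (∀ i : ℕ, i < N →
        ∀ s ∈ Set.Ico (gmesh T r N i) (gmesh T r N (i + 1)), hat s = gmesh T r N i) →
      ∀ n : ℕ, 2 ≤ n → n ≤ N →
        (∫ s in (gmesh T r N 1)..(gmesh T r N n),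
            (gmesh T r N n - s) ^ (-(2 * β)) *
              ∫ u in (0:ℝ)..(gmesh T r N 1),
                |(s - u) ^ (-β) - (hat s - u) ^ (-β)| ^ 2)
          ≤ C * (N : ℝ) ^ (-(2 * (1 - 2 * β))) := by
  obtain ⟨hβ0, hβ1⟩ := hβ
  have hp : 0 < 1 - 2 * β := by linarith
  set B := 2 ^ (2 * β) / (2 * β) + 2 ^ (1 - 2 * β) / (1 - 2 * β)
  refine ⟨2 / (1 - 2 * β) * (r * T) ^ (2 * (1 - 2 * β)) * B, by positivity, ?_⟩
  intro N hN hat hhat n hn hnN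
  have hmesh := gmesh_strictMono (r := r) hT (by linarith) (by omega : 0 < N)
  have hstep (i : ℕ) (hi : i < N) := gmesh_succ_sub_le hT.le hr hi
  have ht₁ : 0 < gmesh T r N 1 := by
    simpa [gmesh_zero (by linarith : r ≠ 0)] using hmesh zero_lt_one
  have ht₁ε : gmesh T r N 1 ≤ r * T / N := by
    simpa [gmesh_zero (by linarith : r ≠ 0)] using hstep 0 (by omega)
  calc _ ≤ 2 / (1 - 2 * β) * (r * T / N) ^ (2 * (1 - 2 * β)) * B := by
        refine integral_le_of_le_beta_kernel (hmesh (by omega)) (by linarith) (by linarith)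
          (by positivity) (fun s hs => mul_nonneg (Real.rpow_nonneg (by linarith [hs.2]) _)
            (kernelDistSq_nonneg ht₁.le)) fun s hs => ?_
        obtain ⟨i, hi₁, hin, hsi⟩ := hmesh.exists_mem_Ico_of_mem_Ioo hs
        rw [hhat i (by omega) s hsi]
        have hJ := kernelDistSq_le hβ0.le hβ1 ht₁ ht₁ε (hmesh.monotone hi₁) hsi.1
          (by linarith [hstep i (by omega), hsi.2]) hs.1
        calc (gmesh T r N n - s) ^ (-(2 * β)) * kernelDistSq β (gmesh T r N 1) (gmesh T r N i) s
            ≤ (gmesh T r N n - s) ^ (-(2 * β)) * (2 / (1 - 2 * β) * (r * T / N) ^ (2 * (1 - 2 * β))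
              * (s - gmesh T r N 1) ^ (2 * β - 1)) :=
              mul_le_mul_of_nonneg_left hJ (Real.rpow_nonneg (by linarith [hs.2]) _)
          _ = _ := by ring
    _ = _ := by
        rw [Real.div_rpow (by positivity) (Nat.cast_nonneg N), Real.rpow_neg (Nat.cast_nonneg N)]
        ring
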